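/- Let L be a language with a unary connective ¬ and binary connectives ∨ and ∧, F the set of all wffs of L, and ⟨F, 𝒱, ⊨⟩ a semantic structure satisfying (A3), (A1), and (A0). Let |~ be a relation on P(F) × F. Then |~ is a coherency preserving, universe-codefinable pivotal-discriminative consequence relation if and only if |~ satisfies conditions (|~0), (|~6), (|~7), (|~8), (|~10), (|~11), and (|~12). -/

import Mathlib

/-- The set of models of a set of formulas `Γ`. -/
def modSet {F V : Type*} (sat : V → F → Prop) (Γ : Set F) : Set V :=
  {v | ∀ α ∈ Γ, sat v α}

/-- The set of formulas satisfied in every valuation of `S`. -/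
def thSet {F V : Type*} (sat : V → F → Prop) (S : Set V) : Set F :=
  {α | S ⊆ modSet sat {α}}

/-- `D`: the family of definable sets of valuations. -/
def defFam {F V : Type*} (sat : V → F → Prop) : Set (Set V) :=
  {S | ∃ Γ : Set F, modSet sat Γ = S}

/-- The basic consequence operator `C_⊢(Γ) = Th(Mod(Γ))`. -/
def cnsq {F V : Type*} (sat : V → F → Prop) (Γ : Set F) : Set F :=
  thSet sat (modSet sat Γ)

/-- `C_|~(Γ) = {α | Γ |~ α}`. -/
def relC {F : Type*} (rel : Set F → F → Prop) (Γ : Set F) : Set F :=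
  {α | rel Γ α}

/-- `𝐂`: the sets of valuations that do not satisfy both a formula and its negation. -/
def coFam {F V : Type*} (sat : V → F → Prop) (neg : F → F) : Set (Set V) :=
  {S | ∀ α, ¬(S ⊆ modSet sat {α} ∧ S ⊆ modSet sat {neg α})}

/-- `Γ` is consistent: for no `α` do we have both `Γ ⊢ α` and `Γ ⊢ ¬α`. -/
def isConsistent {F V : Type*} (sat : V → F → Prop) (neg : F → F) (Γ : Set F) : Prop :=
  ∀ α, ¬(modSet sat Γ ⊆ modSet sat {α} ∧ modSet sat Γ ⊆ modSet sat {neg α})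

/-- One step of the inductive construction of the sets `H_i(Γ)`:
`hStep … Γ B = {¬β : β ∈ C_⊢(B) \ C_|~(Γ) and ¬β ∉ C_⊢(B)}`. -/
def hStep {F V : Type*} (sat : V → F → Prop) (neg : F → F)
    (rel : Set F → F → Prop) (Γ B : Set F) : Set F :=
  {x | ∃ β, x = neg β ∧ β ∈ cnsq sat B ∧ β ∉ relC rel Γ ∧ neg β ∉ cnsq sat B}

/-- `hPrev … Γ n = Γ ∪ C_|~(Γ) ∪ H_1(Γ) ∪ … ∪ H_n(Γ)`. -/
def hPrev {F V : Type*} (sat : V → F → Prop) (neg : F → F)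
    (rel : Set F → F → Prop) (Γ : Set F) : ℕ → Set F
  | 0 => Γ ∪ relC rel Γ
  | n + 1 => hPrev sat neg rel Γ n ∪ hStep sat neg rel Γ (hPrev sat neg rel Γ n)

/-- `H(Γ) = ⋃_{i ≥ 1} H_i(Γ)`, where `H_{n+1}(Γ) = hStep … Γ (hPrev … Γ n)`. -/
def hSet {F V : Type*} (sat : V → F → Prop) (neg : F → F)
    (rel : Set F → F → Prop) (Γ : Set F) : Set F :=
  ⋃ n : ℕ, hStep sat neg rel Γ (hPrev sat neg rel Γ n)

/-- Assumption `(A2)`. -/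
def assumpA2 {F V : Type*} (sat : V → F → Prop) (neg : F → F) : Prop :=
  ∀ (Γ : Set F) (α : F), α ∉ cnsq sat Γ → neg α ∉ cnsq sat Γ →
    ¬(modSet sat Γ ∩ modSet sat {α} ⊆ modSet sat {neg α})

/-- Assumption `(A3)`. -/
def assumpA3 {F V : Type*} (sat : V → F → Prop) (neg : F → F)
    (disj conj : F → F → F) : Prop :=
  ∀ α β : F,
    modSet sat {disj α β} = modSet sat {α} ∪ modSet sat {β} ∧
    modSet sat {conj α β} = modSet sat {α} ∩ modSet sat {β} ∧
    modSet sat {neg (neg α)} = modSet sat {α} ∧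
    modSet sat {neg (disj α β)} = modSet sat {conj (neg α) (neg β)} ∧
    modSet sat {neg (conj α β)} = modSet sat {disj (neg α) (neg β)}

/-- Condition `(|~0)`. -/
def cond0 {F V : Type*} (sat : V → F → Prop) (rel : Set F → F → Prop) : Prop :=
  ∀ Γ Δ : Set F, cnsq sat Γ = cnsq sat Δ → relC rel Γ = relC rel Δ

/-- Condition `(|~6)`. -/
def cond6 {F V : Type*} (sat : V → F → Prop) (neg : F → F)
    (rel : Set F → F → Prop) : Prop :=
  ∀ (Γ : Set F) (α β : F),
    β ∈ cnsq sat (Γ ∪ relC rel Γ) → β ∉ relC rel Γ →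
    neg α ∈ cnsq sat (Γ ∪ relC rel Γ ∪ {neg β}) → α ∉ relC rel Γ

/-- Condition `(|~7)`. -/
def cond7 {F V : Type*} (sat : V → F → Prop) (neg : F → F) (disj : F → F → F)
    (rel : Set F → F → Prop) : Prop :=
  ∀ (Γ : Set F) (α β : F),
    α ∈ cnsq sat (Γ ∪ relC rel Γ) → α ∉ relC rel Γ →
    β ∈ cnsq sat (Γ ∪ relC rel Γ ∪ {neg α}) → β ∉ relC rel Γ →
    disj α β ∉ relC rel Γ

/-- Condition `(|~8)`. -/
def cond8 {F V : Type*} (sat : V → F → Prop) (neg : F → F)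
    (rel : Set F → F → Prop) : Prop :=
  ∀ (Γ : Set F) (α : F), α ∈ relC rel Γ → neg α ∉ cnsq sat (Γ ∪ relC rel Γ)

/-- Condition `(|~9)`. -/
def cond9 {F V : Type*} (sat : V → F → Prop) (neg : F → F)
    (rel : Set F → F → Prop) : Prop :=
  ∀ Γ Δ : Set F, relC rel Γ ∪ hSet sat neg rel Γ ⊆
    cnsq sat (Δ ∪ relC rel Δ ∪ hSet sat neg rel Δ ∪ Γ)

/-- Condition `(|~10)`. -/
def cond10 {F V : Type*} (sat : V → F → Prop) (neg : F → F)
    (rel : Set F → F → Prop) : Prop :=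
  ∀ Γ : Set F, isConsistent sat neg Γ →
    isConsistent sat neg (relC rel Γ) ∧ Γ ⊆ relC rel Γ ∧
      cnsq sat (relC rel Γ) = relC rel Γ

/-- Condition `(|~11)`. -/
def cond11 {F V : Type*} (sat : V → F → Prop) (neg : F → F)
    (rel : Set F → F → Prop) : Prop :=
  ∀ Γ : Set F, cnsq sat (Γ ∪ relC rel Γ ∪ hSet sat neg rel Γ) =
    thSet sat {v ∈ modSet sat Γ | ∀ Δ : Set F, v ∈ modSet sat Δ →
      v ∈ modSet sat (relC rel Δ ∪ hSet sat neg rel Δ)}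

/-- Condition `(|~12)`. -/
def cond12 {F V : Type*} (sat : V → F → Prop) (neg : F → F)
    (rel : Set F → F → Prop) : Prop :=
  Set.univ \ {v : V | ∀ Δ : Set F, v ∈ modSet sat Δ →
    v ∈ modSet sat (relC rel Δ ∪ hSet sat neg rel Δ)} ∈ defFam sat

/-! Strong coherence on a family containing `𝒱` forces `μ(A) = A ∩ M` with `M = μ(𝒱)`, so both
directions compare a set `M` with the set `X` of valuations that satisfy `C_|~(Δ) ∪ H(Δ)` whenever
they satisfy `Δ`.

If `(|~6)`, `(|~7)`, `(|~8)` hold: as `𝒱` is finite, the models of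
`Γ ∪ C_|~(Γ) ∪ H_1(Γ) ∪ … ∪ H_n(Γ)` stabilise, so `H(Γ)` is saturated, and by `(|~7)` all of
`H(Γ)` acts as a single formula `¬δ`. Then `(|~6)` and `(|~8)` give `Γ |~ α` iff `α`, but not `¬α`,
follows from `Γ ∪ C_|~(Γ) ∪ H(Γ)`, which `(|~11)` turns into the representation by `X`.

Conversely, for `μ(A) = A ∩ M` coherency preservation and saturation give
`Th(Mod(Γ) ∩ M) = C_⊢(Γ ∪ C_|~(Γ) ∪ H(Γ))`, and universe-codefinability with `(A0)` gives
`X = M`. -/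

section

variable {F V : Type*} {sat : V → F → Prop} {neg : F → F} {disj conj : F → F → F}
  {rel : Set F → F → Prop}

theorem mem_modSet_singleton {v : V} {α : F} : v ∈ modSet sat {α} ↔ sat v α := by
  simp [modSet]

theorem subset_modSet_iff {S : Set V} {Γ : Set F} :
    S ⊆ modSet sat Γ ↔ ∀ α ∈ Γ, S ⊆ modSet sat {α} :=
  ⟨fun h α hα _ hv => mem_modSet_singleton.2 (h hv α hα),
    fun h _ hv α hα => mem_modSet_singleton.1 (h α hα hv)⟩

theorem mem_cnsq {Γ : Set F} {α : F} : α ∈ cnsq sat Γ ↔ modSet sat Γ ⊆ modSet sat {α} :=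
  Iff.rfl

theorem mem_cnsq_of_mem {Γ : Set F} {α : F} (h : α ∈ Γ) : α ∈ cnsq sat Γ :=
  subset_modSet_iff.1 subset_rfl α h

theorem modSet_anti {Γ Δ : Set F} (h : Γ ⊆ Δ) : modSet sat Δ ⊆ modSet sat Γ :=
  fun _ hv α hα => hv α (h hα)

theorem modSet_union (Γ Δ : Set F) : modSet sat (Γ ∪ Δ) = modSet sat Γ ∩ modSet sat Δ := by
  ext v
  simp [modSet, or_imp, forall_and]

theorem modSet_iUnion {ι : Sort*} (Γ : ι → Set F) :
    modSet sat (⋃ i, Γ i) = ⋂ i, modSet sat (Γ i) := by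
  ext v
  simp only [modSet, Set.mem_iUnion, Set.mem_ofPred_eq, Set.mem_iInter]
  exact ⟨fun h i α hα => h α ⟨i, hα⟩, fun h α ⟨i, hα⟩ => h i α hα⟩

theorem modSet_empty : modSet sat (∅ : Set F) = Set.univ := by
  ext v
  simp [modSet]

theorem modSet_eq_sInter_image (Γ : Set F) :
    modSet sat Γ = ⋂₀ ((fun α => modSet sat {α}) '' Γ) := by
  ext v
  simp [modSet]

theorem modSet_cnsq (Γ : Set F) : modSet sat (cnsq sat Γ) = modSet sat Γ :=
  (modSet_anti fun _ => mem_cnsq_of_mem).antisymm (subset_modSet_iff.2 fun _ hα => hα)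

theorem modSet_disj (hA3 : assumpA3 sat neg disj conj) (α β : F) :
    modSet sat {disj α β} = modSet sat {α} ∪ modSet sat {β} :=
  (hA3 α β).1

theorem modSet_neg_neg (hA3 : assumpA3 sat neg disj conj) (α : F) :
    modSet sat {neg (neg α)} = modSet sat {α} :=
  (hA3 α α).2.2.1

theorem modSet_neg_disj (hA3 : assumpA3 sat neg disj conj) (α β : F) :
    modSet sat {neg (disj α β)} = modSet sat {neg α} ∩ modSet sat {neg β} := by
  rw [(hA3 α β).2.2.2.1, (hA3 (neg α) (neg β)).2.1]

theorem choice_eq_inter_univ {μ : Set V → Set V} {𝒟 : Set (Set V)}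
    (hsub : ∀ A ∈ 𝒟, μ A ⊆ A) (hSC : ∀ A ∈ 𝒟, ∀ B ∈ 𝒟, μ B ∩ A ⊆ μ A)
    (huniv : Set.univ ∈ 𝒟) {A : Set V} (hA : A ∈ 𝒟) : μ A = A ∩ μ Set.univ :=
  (Set.subset_inter (hsub A hA) fun _ hv => hSC _ huniv A hA ⟨hv, trivial⟩).antisymm
    fun _ ⟨hvA, hv⟩ => hSC A hA _ huniv ⟨hv, hvA⟩

theorem inter_sInter_induction {P : Set V → Prop} {T : Set V} {𝒯 : Set (Set V)}
    (h𝒯 : 𝒯.Finite) (hT : P T) (hstep : ∀ S ⊆ T, P S → ∀ s ∈ 𝒯, P (S ∩ s)) : P (T ∩ ⋂₀ 𝒯) := by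
  refine Set.Finite.induction_on_subset (motive := fun 𝒮 _ => P (T ∩ ⋂₀ 𝒮)) 𝒯 h𝒯
    (by simpa using hT) fun {s 𝒮} hs _ _ ih => ?_
  rw [Set.sInter_insert, Set.inter_comm s, ← Set.inter_assoc]
  exact hstep _ Set.inter_subset_left ih s hs

theorem hPrev_succ (Γ : Set F) (n : ℕ) :
    hPrev sat neg rel Γ (n + 1) =
      hPrev sat neg rel Γ n ∪ hStep sat neg rel Γ (hPrev sat neg rel Γ n) :=
  rfl

theorem hPrev_mono (Γ : Set F) : Monotone (hPrev sat neg rel Γ) :=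
  monotone_nat_of_le_succ fun _ => Set.subset_union_left

theorem iUnion_hPrev (Γ : Set F) :
    ⋃ n, hPrev sat neg rel Γ n = Γ ∪ relC rel Γ ∪ hSet sat neg rel Γ := by
  refine (Set.iUnion_subset fun n => ?_).antisymm
    (Set.union_subset (Set.subset_iUnion (hPrev sat neg rel Γ) 0)
      (Set.iUnion_mono' fun n => ⟨n + 1, Set.subset_union_right⟩))
  induction n with
  | zero => exact Set.subset_union_left
  | succ n ih => exact Set.union_subset ih (Set.subset_union_of_subset_right
    (Set.subset_iUnion (fun n => hStep sat neg rel Γ (hPrev sat neg rel Γ n)) n) _)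

theorem modSet_hClosure (Γ : Set F) :
    modSet sat (Γ ∪ relC rel Γ ∪ hSet sat neg rel Γ) =
      modSet sat Γ ∩ modSet sat (relC rel Γ ∪ hSet sat neg rel Γ) := by
  rw [Set.union_assoc, modSet_union]

theorem exists_modSet_hClosure_eq [Finite V] (Γ : Set F) :
    ∃ N, modSet sat (Γ ∪ relC rel Γ ∪ hSet sat neg rel Γ) = modSet sat (hPrev sat neg rel Γ N) ∧
      modSet sat (hPrev sat neg rel Γ (N + 1)) = modSet sat (hPrev sat neg rel Γ N) := by
  have hanti : Antitone fun n => modSet sat (hPrev sat neg rel Γ n) :=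
    fun _ _ hmn => modSet_anti (hPrev_mono Γ hmn)
  obtain ⟨N, hN⟩ := WellFoundedLT.antitone_chain_condition hanti
  refine ⟨N, ?_, (hN _ N.le_succ).symm⟩
  rw [← iUnion_hPrev, modSet_iUnion]
  refine (Set.iInter_subset _ N).antisymm (Set.subset_iInter fun n => ?_)
  rcases le_total n N with hn | hn
  · exact hanti hn
  · exact (hN n hn).le

/-- Once the models of `Γ ∪ C_|~(Γ) ∪ H_1(Γ) ∪ … ∪ H_N(Γ)` stop shrinking, `H_{N+1}(Γ)` has
added the negation of every consequence outside `C_|~(Γ)`. -/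
theorem neg_mem_cnsq_hClosure [Finite V] {Γ : Set F} {β : F}
    (hβ : β ∈ cnsq sat (Γ ∪ relC rel Γ ∪ hSet sat neg rel Γ)) (hβC : β ∉ relC rel Γ) :
    neg β ∈ cnsq sat (Γ ∪ relC rel Γ ∪ hSet sat neg rel Γ) := by
  obtain ⟨N, hcl, hstable⟩ := exists_modSet_hClosure_eq (sat := sat) (neg := neg) (rel := rel) Γ
  rw [mem_cnsq, hcl] at hβ ⊢
  by_contra hnβ
  have hstep : neg β ∈ hStep sat neg rel Γ (hPrev sat neg rel Γ N) := ⟨β, rfl, hβ, hβC, hnβ⟩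
  exact hnβ (hstable ▸ mem_cnsq_of_mem (Set.mem_union_right _ hstep))

theorem hSet_eq_empty {Γ : Set F} (h : cnsq sat (Γ ∪ relC rel Γ) ⊆ relC rel Γ) :
    hSet sat neg rel Γ = ∅ := by
  have hstep : hStep sat neg rel Γ (hPrev sat neg rel Γ 0) = ∅ :=
    Set.eq_empty_iff_forall_notMem.2 fun _ ⟨_, _, hβ, hβC, _⟩ => hβC (h hβ)
  have hconst : ∀ n, hPrev sat neg rel Γ n = hPrev sat neg rel Γ 0 := by
    intro n
    induction n with
    | zero => rfl
    | succ n ih => rw [hPrev_succ, ih, hstep, Set.union_empty]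
  simp only [hSet, hconst, hstep, Set.iUnion_empty]

def modelSet (sat : V → F → Prop) (neg : F → F) (rel : Set F → F → Prop) : Set V :=
  {v | ∀ Δ : Set F, v ∈ modSet sat Δ → v ∈ modSet sat (relC rel Δ ∪ hSet sat neg rel Δ)}

theorem cond11_iff : cond11 sat neg rel ↔ ∀ Γ : Set F,
    cnsq sat (Γ ∪ relC rel Γ ∪ hSet sat neg rel Γ) =
      thSet sat (modSet sat Γ ∩ modelSet sat neg rel) :=
  Iff.rfl

theorem cond12_iff : cond12 sat neg rel ↔ Set.univ \ modelSet sat neg rel ∈ defFam sat :=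
  Iff.rfl

/-- `rel` is pivotal-discriminative for the choice function `A ↦ A ∩ M`. -/
def PivotalDiscriminative (sat : V → F → Prop) (neg : F → F) (rel : Set F → F → Prop)
    (M : Set V) : Prop :=
  ∀ (Γ : Set F) (α : F), rel Γ α ↔
    (modSet sat Γ ∩ M ⊆ modSet sat {α} ∧ ¬ modSet sat Γ ∩ M ⊆ modSet sat {neg α})

namespace PivotalDiscriminative

variable {M : Set V} {Γ : Set F} {α : F}

theorem subset_of_rel (h : PivotalDiscriminative sat neg rel M) (hr : rel Γ α) :
    modSet sat Γ ∩ M ⊆ modSet sat {α} :=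
  ((h Γ α).1 hr).1

theorem subset_neg_of_not_rel (h : PivotalDiscriminative sat neg rel M)
    (hα : modSet sat Γ ∩ M ⊆ modSet sat {α}) (hr : ¬ rel Γ α) :
    modSet sat Γ ∩ M ⊆ modSet sat {neg α} := by
  by_contra hn
  exact hr ((h Γ α).2 ⟨hα, hn⟩)

theorem inter_subset_modSet_relC (h : PivotalDiscriminative sat neg rel M) (Γ : Set F) :
    modSet sat Γ ∩ M ⊆ modSet sat (Γ ∪ relC rel Γ) := by
  rw [modSet_union]
  exact Set.subset_inter Set.inter_subset_left (subset_modSet_iff.2 fun _ hα => h.subset_of_rel hα)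

theorem inter_subset_modSet_hPrev (h : PivotalDiscriminative sat neg rel M) (Γ : Set F) (n : ℕ) :
    modSet sat Γ ∩ M ⊆ modSet sat (hPrev sat neg rel Γ n) := by
  induction n with
  | zero => exact h.inter_subset_modSet_relC Γ
  | succ n ih =>
    rw [hPrev_succ, modSet_union, Set.subset_inter_iff, subset_modSet_iff (Γ := hStep _ _ _ _ _)]
    exact ⟨ih, fun _ ⟨_, hβneg, hβ, hβC, _⟩ => hβneg ▸ h.subset_neg_of_not_rel (ih.trans hβ) hβC⟩

theorem inter_subset_modSet_hClosure (h : PivotalDiscriminative sat neg rel M) (Γ : Set F) :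
    modSet sat Γ ∩ M ⊆ modSet sat (Γ ∪ relC rel Γ ∪ hSet sat neg rel Γ) := by
  rw [← iUnion_hPrev, modSet_iUnion]
  exact Set.subset_iInter (h.inter_subset_modSet_hPrev Γ)

/-- Saturation of `H`, applied first to `β ∨ φ` and then to `¬β`. -/
theorem mem_cnsq_hClosure_of_neg [Finite V] (hA3 : assumpA3 sat neg disj conj)
    (h : PivotalDiscriminative sat neg rel M) {φ β : F}
    (hφ : φ ∈ cnsq sat (Γ ∪ relC rel Γ ∪ hSet sat neg rel Γ))
    (hnφ : modSet sat Γ ∩ M ⊆ modSet sat {neg φ})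
    (hβ : modSet sat Γ ∩ M ⊆ modSet sat {β}) (hnβ : modSet sat Γ ∩ M ⊆ modSet sat {neg β}) :
    β ∈ cnsq sat (Γ ∪ relC rel Γ ∪ hSet sat neg rel Γ) := by
  have hdisj : disj β φ ∈ cnsq sat (Γ ∪ relC rel Γ ∪ hSet sat neg rel Γ) := by
    rw [mem_cnsq, modSet_disj hA3]
    exact hφ.trans Set.subset_union_right
  have hdisj_not_rel : ¬ rel Γ (disj β φ) := fun hr =>
    ((h Γ _).1 hr).2 (by rw [modSet_neg_disj hA3]; exact Set.subset_inter hnβ hnφ)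
  have hneg : neg β ∈ cnsq sat (Γ ∪ relC rel Γ ∪ hSet sat neg rel Γ) := by
    have := neg_mem_cnsq_hClosure hdisj hdisj_not_rel
    rw [mem_cnsq, modSet_neg_disj hA3] at this
    exact this.trans Set.inter_subset_left
  have hneg_not_rel : ¬ rel Γ (neg β) := fun hr =>
    ((h Γ _).1 hr).2 (by rwa [modSet_neg_neg hA3])
  have := neg_mem_cnsq_hClosure hneg hneg_not_rel
  rwa [mem_cnsq, modSet_neg_neg hA3] at this

theorem thSet_eq_cnsq_hClosure [Finite V] (hA3 : assumpA3 sat neg disj conj)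
    (h : PivotalDiscriminative sat neg rel M)
    (hCP : ∀ Δ : Set F, modSet sat Δ ∈ coFam sat neg → modSet sat Δ ∩ M ∈ coFam sat neg)
    (Γ : Set F) :
    thSet sat (modSet sat Γ ∩ M) = cnsq sat (Γ ∪ relC rel Γ ∪ hSet sat neg rel Γ) := by
  have hm := h.inter_subset_modSet_hClosure Γ
  refine Set.Subset.antisymm (fun β hβ => ?_) fun _ hβ => hm.trans hβ
  by_cases hr : rel Γ β
  · exact mem_cnsq_of_mem (Or.inl (Or.inr hr))
  have hnβ := h.subset_neg_of_not_rel hβ hr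
  by_cases hco : modSet sat (Γ ∪ relC rel Γ ∪ hSet sat neg rel Γ) ∈ coFam sat neg
  · have hcut : modSet sat (Γ ∪ relC rel Γ ∪ hSet sat neg rel Γ) ∩ M = modSet sat Γ ∩ M :=
      (Set.inter_subset_inter_left M (modSet_anti (fun _ hα => Or.inl (Or.inl hα)))).antisymm
        (Set.subset_inter hm Set.inter_subset_right)
    exact absurd ⟨hβ, hnβ⟩ (hcut ▸ hCP _ hco β)
  · obtain ⟨φ, hφ⟩ := not_forall.1 hco
    obtain ⟨hφ, hnφ⟩ := not_not.1 hφ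
    exact h.mem_cnsq_hClosure_of_neg hA3 hφ (hm.trans hnφ) hβ hnβ

theorem modelSet_eq [Finite V] (hA3 : assumpA3 sat neg disj conj)
    (hA0 : modSet sat (Set.univ : Set F) = ∅) (h : PivotalDiscriminative sat neg rel M)
    (hCP : ∀ Δ : Set F, modSet sat Δ ∈ coFam sat neg → modSet sat Δ ∩ M ∈ coFam sat neg)
    (hUC : Set.univ \ M ∈ defFam sat) :
    modelSet sat neg rel = M := by
  refine Set.Subset.antisymm (fun v hv => ?_) fun v hv Δ hΔ =>
    ((modSet_hClosure Δ ▸ h.inter_subset_modSet_hClosure Δ) ⟨hΔ, hv⟩).2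
  by_contra hvM
  obtain ⟨Γ₀, hΓ₀⟩ := hUC
  have hv₀ : v ∈ modSet sat Γ₀ := hΓ₀ ▸ ⟨trivial, hvM⟩
  -- `Mod(Γ₀) ∩ M = ∅`, so `Γ₀ ∪ C_|~(Γ₀) ∪ H(Γ₀)` proves every formula, yet `v` satisfies it.
  have hall : cnsq sat (Γ₀ ∪ relC rel Γ₀ ∪ hSet sat neg rel Γ₀) = Set.univ := by
    rw [← h.thSet_eq_cnsq_hClosure hA3 hCP, hΓ₀, Set.sdiff_inter_self]
    exact Set.eq_univ_of_forall fun _ => Set.empty_subset _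
  have hvcl : v ∈ modSet sat (Γ₀ ∪ relC rel Γ₀ ∪ hSet sat neg rel Γ₀) :=
    modSet_hClosure Γ₀ ▸ ⟨hv₀, hv Γ₀ hv₀⟩
  rw [← modSet_cnsq, hall, hA0] at hvcl
  exact hvcl

theorem satisfies_cond0 (h : PivotalDiscriminative sat neg rel M) : cond0 sat rel := by
  intro Γ Δ hΓΔ
  have hmod : modSet sat Γ = modSet sat Δ := by rw [← modSet_cnsq Γ, hΓΔ, modSet_cnsq]
  ext α
  change rel Γ α ↔ rel Δ α
  rw [h Γ α, h Δ α, hmod]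

theorem satisfies_cond6 (h : PivotalDiscriminative sat neg rel M) : cond6 sat neg rel := by
  intro Γ α β hβ hβC hnα hr
  have hnβ := h.subset_neg_of_not_rel ((h.inter_subset_modSet_relC Γ).trans hβ) hβC
  have hcut : modSet sat Γ ∩ M ⊆ modSet sat (Γ ∪ relC rel Γ ∪ {neg β}) := by
    rw [modSet_union]
    exact Set.subset_inter (h.inter_subset_modSet_relC Γ) hnβ
  exact ((h Γ α).1 hr).2 (hcut.trans hnα)

theorem satisfies_cond7 (hA3 : assumpA3 sat neg disj conj)
    (h : PivotalDiscriminative sat neg rel M) :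
    cond7 sat neg disj rel := by
  intro Γ α β hα hαC hβ hβC hr
  have hnα := h.subset_neg_of_not_rel ((h.inter_subset_modSet_relC Γ).trans hα) hαC
  have hcut : modSet sat Γ ∩ M ⊆ modSet sat (Γ ∪ relC rel Γ ∪ {neg α}) := by
    rw [modSet_union]
    exact Set.subset_inter (h.inter_subset_modSet_relC Γ) hnα
  have hnβ := h.subset_neg_of_not_rel (hcut.trans hβ) hβC
  exact ((h Γ _).1 hr).2 (by rw [modSet_neg_disj hA3]; exact Set.subset_inter hnα hnβ)

theorem satisfies_cond8 (h : PivotalDiscriminative sat neg rel M) : cond8 sat neg rel :=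
  fun Γ _ hr hnα => ((h Γ _).1 hr).2 ((h.inter_subset_modSet_relC Γ).trans hnα)

theorem satisfies_cond10 (h : PivotalDiscriminative sat neg rel M)
    (hCP : ∀ Δ : Set F, modSet sat Δ ∈ coFam sat neg → modSet sat Δ ∩ M ∈ coFam sat neg) :
    cond10 sat neg rel := by
  intro Γ hΓ
  have hco := hCP Γ hΓ
  have hC : modSet sat Γ ∩ M ⊆ modSet sat (relC rel Γ) :=
    (h.inter_subset_modSet_relC Γ).trans (modSet_anti Set.subset_union_right)
  have hrel : ∀ α, modSet sat Γ ∩ M ⊆ modSet sat {α} → rel Γ α :=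
    fun α hα => (h Γ α).2 ⟨hα, fun hnα => hco α ⟨hα, hnα⟩⟩
  refine ⟨fun α ⟨hα, hnα⟩ => hco α ⟨hC.trans hα, hC.trans hnα⟩,
    fun α hα => hrel α fun v hv => mem_cnsq_of_mem hα hv.1, ?_⟩
  exact Set.Subset.antisymm (fun α hα => hrel α (hC.trans hα)) fun _ => mem_cnsq_of_mem

theorem satisfies_cond11 [Finite V] (hA3 : assumpA3 sat neg disj conj)
    (hA0 : modSet sat (Set.univ : Set F) = ∅) (h : PivotalDiscriminative sat neg rel M)
    (hCP : ∀ Δ : Set F, modSet sat Δ ∈ coFam sat neg → modSet sat Δ ∩ M ∈ coFam sat neg)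
    (hUC : Set.univ \ M ∈ defFam sat) :
    cond11 sat neg rel :=
  cond11_iff.2 fun Γ => by
    rw [h.modelSet_eq hA3 hA0 hCP hUC, h.thSet_eq_cnsq_hClosure hA3 hCP]

theorem satisfies_cond12 [Finite V] (hA3 : assumpA3 sat neg disj conj)
    (hA0 : modSet sat (Set.univ : Set F) = ∅) (h : PivotalDiscriminative sat neg rel M)
    (hCP : ∀ Δ : Set F, modSet sat Δ ∈ coFam sat neg → modSet sat Δ ∩ M ∈ coFam sat neg)
    (hUC : Set.univ \ M ∈ defFam sat) :
    cond12 sat neg rel :=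
  cond12_iff.2 (h.modelSet_eq hA3 hA0 hCP hUC ▸ hUC)

end PivotalDiscriminative

/-- By `(|~7)`, every `Mod(Γ ∪ C_|~(Γ) ∪ H_1(Γ) ∪ … ∪ H_n(Γ))` has this shape: all the formulas
added by `H` fold into a single `¬δ`. -/
def IsSingleNegCut (sat : V → F → Prop) (neg : F → F) (rel : Set F → F → Prop) (Γ : Set F)
    (T : Set V) : Prop :=
  T = modSet sat (Γ ∪ relC rel Γ) ∨
    ∃ δ ∈ cnsq sat (Γ ∪ relC rel Γ), δ ∉ relC rel Γ ∧ T = modSet sat (Γ ∪ relC rel Γ ∪ {neg δ})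

theorem IsSingleNegCut.inter_neg (hA3 : assumpA3 sat neg disj conj) (h7 : cond7 sat neg disj rel)
    {Γ : Set F} {T : Set V} (hT : IsSingleNegCut sat neg rel Γ T) {β : F}
    (hβ : T ⊆ modSet sat {β}) (hβC : β ∉ relC rel Γ) :
    IsSingleNegCut sat neg rel Γ (T ∩ modSet sat {neg β}) := by
  right
  rcases hT with rfl | ⟨δ, hδ, hδC, rfl⟩
  · exact ⟨β, hβ, hβC, (modSet_union _ _).symm⟩
  · refine ⟨disj δ β, ?_, h7 Γ δ β hδ hδC hβ hβC, ?_⟩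
    · rw [mem_cnsq, modSet_disj hA3]
      exact hδ.trans Set.subset_union_left
    · rw [modSet_union _ {neg δ}, modSet_union _ {neg (disj δ β)}, modSet_neg_disj hA3,
        Set.inter_assoc]

theorem isSingleNegCut_modSet_hPrev [Finite V] (hA3 : assumpA3 sat neg disj conj)
    (h7 : cond7 sat neg disj rel) (Γ : Set F) (n : ℕ) :
    IsSingleNegCut sat neg rel Γ (modSet sat (hPrev sat neg rel Γ n)) := by
  induction n with
  | zero => exact Or.inl rfl
  | succ n ih =>
    rw [hPrev_succ, modSet_union, modSet_eq_sInter_image (hStep _ _ _ _ _)]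
    refine inter_sInter_induction (Set.toFinite _) ih fun S hS hSn _ hs => ?_
    obtain ⟨_, ⟨β, rfl, hβ, hβC, -⟩, rfl⟩ := hs
    exact hSn.inter_neg hA3 h7 (hS.trans hβ) hβC

theorem rel_iff_mem_cnsq_hClosure [Finite V] (hA3 : assumpA3 sat neg disj conj)
    (h6 : cond6 sat neg rel) (h7 : cond7 sat neg disj rel) (h8 : cond8 sat neg rel)
    (Γ : Set F) (α : F) :
    rel Γ α ↔ α ∈ cnsq sat (Γ ∪ relC rel Γ ∪ hSet sat neg rel Γ) ∧
      neg α ∉ cnsq sat (Γ ∪ relC rel Γ ∪ hSet sat neg rel Γ) := by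
  refine ⟨fun hr => ⟨mem_cnsq_of_mem (Or.inl (Or.inr hr)), fun hnα => ?_⟩,
    fun ⟨hα, hnα⟩ => by_contra fun hr => hnα (neg_mem_cnsq_hClosure hα hr)⟩
  obtain ⟨N, hcl, -⟩ := exists_modSet_hClosure_eq (sat := sat) (neg := neg) (rel := rel) Γ
  rw [mem_cnsq, hcl] at hnα
  rcases isSingleNegCut_modSet_hPrev hA3 h7 Γ N with hcut | ⟨δ, hδ, hδC, hcut⟩
  · exact h8 Γ α hr (by rwa [mem_cnsq, ← hcut])
  · exact h6 Γ α δ hδ hδC (by rwa [mem_cnsq, ← hcut]) hr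

theorem coFam_inter_modelSet (h10 : cond10 sat neg rel) (h11 : cond11 sat neg rel) {Γ : Set F}
    (hΓ : modSet sat Γ ∈ coFam sat neg) :
    modSet sat Γ ∩ modelSet sat neg rel ∈ coFam sat neg := by
  obtain ⟨hC, hsub, hclosed⟩ := h10 Γ hΓ
  have hunion : Γ ∪ relC rel Γ = relC rel Γ := Set.union_eq_right.2 hsub
  have hH : hSet sat neg rel Γ = ∅ := hSet_eq_empty (by rw [hunion, hclosed])
  have hth : thSet sat (modSet sat Γ ∩ modelSet sat neg rel) = relC rel Γ := by
    rw [← cond11_iff.1 h11, hH, Set.union_empty, hunion, hclosed]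
  intro α ⟨hα, hnα⟩
  have hαC : α ∈ relC rel Γ := by rw [← hth]; exact hα
  have hnαC : neg α ∈ relC rel Γ := by rw [← hth]; exact hnα
  exact hC α ⟨mem_cnsq_of_mem hαC, mem_cnsq_of_mem hnαC⟩

end

/-- Under `(A3)`, `(A1)`, and `(A0)`, `|~` is a coherency preserving,
universe-codefinable pivotal-discriminative consequence relation iff it satisfies
`(|~0)`, `(|~6)`, `(|~7)`, `(|~8)`, `(|~10)`, `(|~11)`, and `(|~12)`. -/
theorem stmt13 {F V : Type*} (neg : F → F) (disj conj : F → F → F)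
    (sat : V → F → Prop)
    (hA3 : assumpA3 sat neg disj conj) (hA1 : Finite V)
    (hA0 : modSet sat (Set.univ : Set F) = ∅)
    (rel : Set F → F → Prop) :
    (∃ μ : Set V → Set V,
        (∀ A ∈ defFam sat, μ A ⊆ A) ∧
        (∀ A ∈ defFam sat, ∀ B ∈ defFam sat, μ B ∩ A ⊆ μ A) ∧
        (∀ A ∈ defFam sat, A ∈ coFam sat neg → μ A ∈ coFam sat neg) ∧
        Set.univ \ μ Set.univ ∈ defFam sat ∧
        (∀ (Γ : Set F) (α : F), rel Γ α ↔
          (μ (modSet sat Γ) ⊆ modSet sat {α} ∧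
            ¬ μ (modSet sat Γ) ⊆ modSet sat {neg α}))) ↔
      (cond0 sat rel ∧ cond6 sat neg rel ∧ cond7 sat neg disj rel ∧
        cond8 sat neg rel ∧ cond10 sat neg rel ∧ cond11 sat neg rel ∧
        cond12 sat neg rel) := by
  constructor
  · rintro ⟨μ, hsub, hSC, hCP, hUC, hrepr⟩
    have hμ : ∀ Γ, μ (modSet sat Γ) = modSet sat Γ ∩ μ Set.univ := fun Γ =>
      choice_eq_inter_univ hsub hSC ⟨∅, modSet_empty⟩ ⟨Γ, rfl⟩
    have hPD : PivotalDiscriminative sat neg rel (μ Set.univ) := fun Γ α => by rw [hrepr, hμ]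
    have hCP' : ∀ Γ, modSet sat Γ ∈ coFam sat neg → modSet sat Γ ∩ μ Set.univ ∈ coFam sat neg :=
      fun Γ hΓ => hμ Γ ▸ hCP _ ⟨Γ, rfl⟩ hΓ
    exact ⟨hPD.satisfies_cond0, hPD.satisfies_cond6, hPD.satisfies_cond7 hA3,
      hPD.satisfies_cond8, hPD.satisfies_cond10 hCP',
      hPD.satisfies_cond11 hA3 hA0 hCP' hUC, hPD.satisfies_cond12 hA3 hA0 hCP' hUC⟩
  · rintro ⟨-, h6, h7, h8, h10, h11, h12⟩
    refine ⟨(· ∩ modelSet sat neg rel), fun _ _ => Set.inter_subset_left,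
      fun _ _ _ _ _ ⟨⟨_, hv⟩, hvA⟩ => ⟨hvA, hv⟩, ?_, by simpa using cond12_iff.1 h12, fun Γ α => ?_⟩
    · rintro _ ⟨Γ, rfl⟩ hΓ
      exact coFam_inter_modelSet h10 h11 hΓ
    · rw [rel_iff_mem_cnsq_hClosure hA3 h6 h7 h8, cond11_iff.1 h11]
      rfl
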